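/- Call a relation E ⊆ ℕ × ℕ locally finite if for every n ∈ ℕ the sets {m : (m,n) ∈ E} and {m : (n,m) ∈ E} are finite. Then: (1) the collection ℰ_lf of all locally finite relations on ℕ is a coarse structure on ℕ; (2) the algebraic uniform Roe algebra ⋃_{E ∈ ℰ_lf} V_E is a proper subset of B(ℓ²(ℕ)); (3) nevertheless C*_u(ℕ, ℰ_lf) = B(ℓ²(ℕ)), i.e., for every a ∈ B(ℓ²(ℕ)) and every ε > 0 there exists b ∈ B(ℓ²(ℕ)) controlled by a locally finite relation with ‖a − b‖ ≤ ε. -/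

import Mathlib

open scoped ENNReal

noncomputable section

namespace QCG

/-- A (classical) coarse structure on a set `X`. -/
structure IsCoarseStructure (X : Type*) (ℰ : Set (Set (X × X))) : Prop where
  diagonal_mem : {p : X × X | p.1 = p.2} ∈ ℰ
  subset_mem : ∀ E ∈ ℰ, ∀ F : Set (X × X), F ⊆ E → F ∈ ℰ
  inv_mem : ∀ E ∈ ℰ, {p : X × X | (p.2, p.1) ∈ E} ∈ ℰ
  union_mem : ∀ E ∈ ℰ, ∀ F ∈ ℰ, E ∪ F ∈ ℰ
  comp_mem : ∀ E ∈ ℰ, ∀ F ∈ ℰ, {p : X × X | ∃ z : X, (p.1, z) ∈ E ∧ (z, p.2) ∈ F} ∈ ℰ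

/-- `ℓ²(ℕ)`. -/
abbrev ltwo : Type := lp (fun _ : ℕ => ℂ) 2

/-- The standard unit vector `δ_n ∈ ℓ²(ℕ)`. -/
def delta (n : ℕ) : ltwo := lp.single 2 n 1

/-- The rank-one partial isometry `e_{xy}` with `e_{xy} δ_y = δ_x` and `e_{xy} δ_z = 0`
for `z ≠ y`. -/
def matUnit (x y : ℕ) : ltwo →L[ℂ] ltwo :=
  (innerSL ℂ (delta y)).smulRight (delta x)

/-- `a` is controlled by the relation `E ⊆ ℕ × ℕ`:
`e_{xx} a e_{yy} = 0` whenever `(x, y) ∉ E`. -/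
def ControlledBy (a : ltwo →L[ℂ] ltwo) (E : Set (ℕ × ℕ)) : Prop :=
  ∀ x y : ℕ, (x, y) ∉ E → matUnit x x * a * matUnit y y = 0

/-- The collection of locally finite relations on `ℕ`. -/
def lfRels : Set (Set (ℕ × ℕ)) :=
  {E : Set (ℕ × ℕ) | ∀ n : ℕ,
    {m : ℕ | (m, n) ∈ E}.Finite ∧ {m : ℕ | (n, m) ∈ E}.Finite}

set_option maxHeartbeats 2000000
set_option synthInstance.maxHeartbeats 1000000

open scoped ComplexConjugate

instance : CompleteSpace (ltwo →L[ℂ] ltwo) := inferInstance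

def ent (a : ltwo →L[ℂ] ltwo) (n m : ℕ) : ℂ := inner (𝕜 := ℂ) (delta n) (a (delta m))

lemma ent_def (a : ltwo →L[ℂ] ltwo) (n m : ℕ) :
    ent a n m = inner (𝕜 := ℂ) (delta n) (a (delta m)) := rfl

lemma inner_delta_left (f : ltwo) (n : ℕ) : (inner ℂ (delta n) f : ℂ) = f n := by
  simp [delta, lp.inner_single_left]

lemma inner_delta_right (f : ltwo) (n : ℕ) : (inner ℂ f (delta n) : ℂ) = conj (f n) := by
  simp [delta, lp.inner_single_right]

lemma delta_apply (n k : ℕ) : (delta n : ∀ _ : ℕ, ℂ) k = if k = n then 1 else 0 := by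
  simp [delta, lp.single_apply, Pi.single_apply]

lemma inner_delta_delta (n m : ℕ) :
    (inner ℂ (delta n) (delta m) : ℂ) = if m = n then 1 else 0 := by
  rw [inner_delta_left, delta_apply]; simp [eq_comm]

lemma norm_delta (n : ℕ) : ‖delta n‖ = 1 := by
  have h : ‖delta n‖ = Real.sqrt (RCLike.re (inner (𝕜 := ℂ) (delta n) (delta n))) :=
    norm_eq_sqrt_re_inner (𝕜 := ℂ) _
  rw [h, inner_delta_delta]
  simp

lemma matUnit_apply (x y : ℕ) (v : ltwo) : matUnit x y v = (inner ℂ (delta y) v : ℂ) • delta x := rfl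

lemma matUnit_mul_eq_zero (c : ltwo →L[ℂ] ltwo) {x y : ℕ} (h : ent c x y = 0) :
    matUnit x x * c * matUnit y y = 0 := by
  refine ContinuousLinearMap.ext fun v => ?_
  simp only [ContinuousLinearMap.mul_apply, ContinuousLinearMap.zero_apply]
  rw [matUnit_apply y y, map_smul, map_smul, matUnit_apply x x]
  rw [show (inner ℂ (delta x) (c (delta y)) : ℂ) = ent c x y from rfl, h]
  simp

lemma ent_sub (a b : ltwo →L[ℂ] ltwo) (n m : ℕ) : ent (a - b) n m = ent a n m - ent b n m := by
  simp [ent, inner_sub_right]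

/-- Column truncation lemma. -/
lemma truncCols (a : ltwo →L[ℂ] ltwo) {ε : ℝ} (hε : 0 < ε) :
    ∃ (b : ltwo →L[ℂ] ltwo) (F : ℕ → Finset ℕ), ‖a - b‖ ≤ ε ∧
      ∀ n m, ent b n m = if n ∈ F m then ent a n m else 0 := by
  -- choose finite truncation sets
  have hchoice : ∀ m : ℕ, ∃ F : Finset ℕ,
      ‖a (delta m) - ∑ k ∈ F, lp.single 2 k (a (delta m) k)‖ ≤ ε / 2 * (1 / 2) ^ m := by
    intro m
    have hs : HasSum (fun k : ℕ => lp.single 2 k ((a (delta m)) k)) (a (delta m)) :=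
      lp.hasSum_single (by norm_num) _
    have hεm : 0 < ε / 2 * (1 / 2 : ℝ) ^ m := by positivity
    have := (Metric.tendsto_nhds.1 hs) _ hεm
    rcases this.exists with ⟨F, hF⟩
    exact ⟨F, by
      rw [dist_eq_norm, norm_sub_rev] at hF
      exact hF.le⟩
  choose F hF using hchoice
  set c : ℕ → ltwo := fun m => a (delta m) - ∑ k ∈ F m, lp.single 2 k (a (delta m) k) with hc
  set r : ℕ → (ltwo →L[ℂ] ltwo) := fun m => (innerSL ℂ (delta m)).smulRight (c m) with hr
  have hrnorm : ∀ m, ‖r m‖ ≤ ε / 2 * (1 / 2) ^ m := by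
    intro m
    have : ‖r m‖ = ‖innerSL ℂ (delta m)‖ * ‖c m‖ := ContinuousLinearMap.norm_smulRight_apply _ _
    rw [this, innerSL_apply_norm, norm_delta, one_mul]
    exact hF m
  have hnsum : Summable (fun m => ‖r m‖) :=
    Summable.of_nonneg_of_le (fun _ => norm_nonneg _) hrnorm
      (Summable.mul_left _ summable_geometric_two)
  have hsum : Summable r := hnsum.of_norm
  set d : ltwo →L[ℂ] ltwo := ∑' m, r m with hd
  have hdnorm : ‖d‖ ≤ ε := by
    have h1 : ‖d‖ ≤ ∑' m, ‖r m‖ := norm_tsum_le_tsum_norm hnsum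
    have h2 : ∑' m, ‖r m‖ ≤ ∑' m, ε / 2 * (1 / 2 : ℝ) ^ m :=
      Summable.tsum_le_tsum hrnorm hnsum (Summable.mul_left _ summable_geometric_two)
    have h3 : ∑' m, ε / 2 * (1 / 2 : ℝ) ^ m = ε := by
      rw [tsum_mul_left, tsum_geometric_two]; ring
    linarith
  have hdapp : ∀ m, d (delta m) = c m := by
    intro m
    have h1 := (ContinuousLinearMap.apply ℂ ltwo (delta m)).hasSum hsum.hasSum
    simp only [ContinuousLinearMap.apply_apply] at h1
    rw [← hd] at h1
    have h2 : (fun k => r k (delta m)) = fun k => if k = m then c m else 0 := by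
      funext k
      simp only [hr, ContinuousLinearMap.smulRight_apply, innerSL_apply_apply]
      rw [inner_delta_delta]
      by_cases h : k = m
      · subst h; simp
      · rw [if_neg (Ne.symm h), zero_smul, if_neg h]
    rw [h2] at h1
    exact h1.unique (hasSum_ite_eq m (c m))
  refine ⟨a - d, F, ?_, ?_⟩
  · simpa using hdnorm
  · intro n m
    rw [ent_sub]
    have hda : ent d n m = ent a n m - (if n ∈ F m then ent a n m else 0) := by
      rw [ent_def, hdapp m]
      simp only [hc, inner_sub_right]
      rw [inner_delta_left]
      have : (inner ℂ (delta n) (∑ k ∈ F m, lp.single 2 k (a (delta m) k)) : ℂ) =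
          ∑ k ∈ F m, (inner ℂ (delta n) (lp.single 2 k (a (delta m) k)) : ℂ) := by
        rw [inner_sum]
      rw [this]
      have heach : ∀ k, (inner ℂ (delta n) (lp.single 2 k (a (delta m) k)) : ℂ) =
          if k = n then (a (delta m)) n else 0 := by
        intro k
        by_cases h : k = n
        · subst h; rw [inner_delta_left, lp.single_apply_self, if_pos rfl]
        · rw [inner_delta_left, lp.single_apply_ne _ _ _ (Ne.symm h), if_neg h]
      rw [Finset.sum_congr rfl (fun k _ => heach k), Finset.sum_ite_eq']
      have hentan : ent a n m = (a (delta m)) n := inner_delta_left _ _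
      rw [← hentan]
    rw [hda]; ring

lemma ent_adjoint (a : ltwo →L[ℂ] ltwo) (n m : ℕ) :
    ent (ContinuousLinearMap.adjoint a) n m = conj (ent a m n) := by
  rw [ent_def, ent_def, ContinuousLinearMap.adjoint_inner_right, ← inner_conj_symm]

lemma approx (a : ltwo →L[ℂ] ltwo) {ε : ℝ} (hε : 0 < ε) :
    ∃ (b : ltwo →L[ℂ] ltwo) (E : Set (ℕ × ℕ)),
      E ∈ lfRels ∧ ControlledBy b E ∧ ‖a - b‖ ≤ ε := by
  obtain ⟨b₁, F, hb₁, he₁⟩ := truncCols (ContinuousLinearMap.adjoint a) (half_pos hε)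
  set b : ltwo →L[ℂ] ltwo := ContinuousLinearMap.adjoint b₁ with hbdef
  have hab : ‖a - b‖ ≤ ε / 2 := by
    have h : a - b = ContinuousLinearMap.adjoint (ContinuousLinearMap.adjoint a - b₁) := by
      rw [map_sub, ContinuousLinearMap.adjoint_adjoint]
    rw [h, LinearIsometryEquiv.norm_map]
    exact hb₁
  have hbent : ∀ n m, ent b n m = if m ∈ F n then ent a n m else 0 := by
    intro n m
    rw [hbdef, ent_adjoint, he₁ m n]
    by_cases h : m ∈ F n
    · rw [if_pos h, if_pos h, ent_adjoint]
      exact Complex.conj_conj _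
    · rw [if_neg h, if_neg h, map_zero]
  obtain ⟨c, G, hbc, he₂⟩ := truncCols b (half_pos hε)
  refine ⟨c, {p : ℕ × ℕ | p.1 ∈ G p.2 ∧ p.2 ∈ F p.1}, ?_, ?_, ?_⟩
  · intro n
    constructor
    · exact ((G n).finite_toSet).subset (fun m hm => hm.1)
    · exact ((F n).finite_toSet).subset (fun m hm => hm.2)
  · intro x y hxy
    apply matUnit_mul_eq_zero
    have hcxy := he₂ x y
    rw [hbent x y] at hcxy
    by_cases h1 : x ∈ G y
    · by_cases h2 : y ∈ F x
      · exact absurd ⟨h1, h2⟩ hxy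
      · rw [hcxy, if_pos h1, if_neg h2]
    · rw [hcxy, if_neg h1]
  · have h : a - c = (a - b) + (b - c) := by abel
    rw [h]
    calc ‖(a - b) + (b - c)‖ ≤ ‖a - b‖ + ‖b - c‖ := norm_add_le _ _
      _ ≤ ε := by linarith

lemma vmem : Memℓp (fun n : ℕ => ((1 / 2 : ℂ)) ^ n) 2 := by
  apply memℓp_gen
  have h : ∀ n : ℕ, ‖((1 / 2 : ℂ)) ^ n‖ ^ (2 : ℝ≥0∞).toReal = ((1 / 4 : ℝ)) ^ n := by
    intro n
    have h2 : ‖((1 / 2 : ℂ)) ^ n‖ = ((1 / 2 : ℝ)) ^ n := by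
      rw [norm_pow]; norm_num
    rw [ENNReal.toReal_ofNat, h2,
      show ((2 : ℝ)) = ((2 : ℕ) : ℝ) by norm_num, Real.rpow_natCast, ← pow_mul,
      show n * 2 = 2 * n by ring, pow_mul]
    norm_num
  exact (summable_geometric_of_lt_one (by norm_num) (by norm_num)).congr fun n => (h n).symm

def vgeo : ltwo := ⟨fun n : ℕ => ((1 / 2 : ℂ)) ^ n, vmem⟩

lemma vgeo_apply (n : ℕ) : (vgeo : ∀ _ : ℕ, ℂ) n = ((1 / 2 : ℂ)) ^ n := rfl

lemma not_all_controlled :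
    {a : ltwo →L[ℂ] ltwo | ∃ E ∈ lfRels, ControlledBy a E} ≠ Set.univ := by
  intro h
  set a : ltwo →L[ℂ] ltwo := (innerSL ℂ vgeo).smulRight (delta 0) with hadef
  have ha : a ∈ {a : ltwo →L[ℂ] ltwo | ∃ E ∈ lfRels, ControlledBy a E} := by
    rw [h]; exact Set.mem_univ _
  obtain ⟨E, hE, hctrl⟩ := ha
  have hall : ∀ m : ℕ, (0, m) ∈ E := by
    intro m
    by_contra hm
    have h0 := hctrl 0 m hm
    have happ := congrArg (fun T : ltwo →L[ℂ] ltwo => T (delta m)) h0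
    simp only [ContinuousLinearMap.mul_apply, ContinuousLinearMap.zero_apply] at happ
    have haval : a (delta m) = ((1 / 2 : ℂ)) ^ m • delta 0 := by
      rw [hadef]
      show (inner ℂ vgeo (delta m) : ℂ) • delta 0 = _
      rw [inner_delta_right, vgeo_apply]
      congr 1
      simp [map_pow, map_div₀, Complex.conj_ofNat]
    rw [matUnit_apply m m, inner_delta_delta, if_pos rfl, one_smul, haval,
      map_smul, matUnit_apply 0 0, inner_delta_delta, if_pos rfl, one_smul] at happ
    have hne : ((1 / 2 : ℂ)) ^ m ≠ 0 := pow_ne_zero _ (by norm_num)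
    have hdz : delta 0 = 0 := by
      rcases smul_eq_zero.1 happ with h' | h'
      · exact absurd h' hne
      · exact h'
    have := norm_delta 0
    rw [hdz, norm_zero] at this
    norm_num at this
  have huniv : {m : ℕ | (0, m) ∈ E} = Set.univ := Set.eq_univ_of_forall hall
  have hfin := (hE 0).2
  rw [huniv] at hfin
  exact Set.infinite_univ hfin

lemma lf_coarse : IsCoarseStructure ℕ lfRels := by
  constructor
  · intro n
    constructor
    · exact (Set.finite_singleton n).subset (fun m hm => hm)
    · exact (Set.finite_singleton n).subset (fun m hm => hm.symm)
  · intro E hE Fr hsub n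
    exact ⟨((hE n).1).subset (fun m hm => hsub hm), ((hE n).2).subset (fun m hm => hsub hm)⟩
  · intro E hE n
    exact ⟨(hE n).2, (hE n).1⟩
  · intro E hE Fr hF n
    refine ⟨Set.Finite.subset (((hE n).1).union ((hF n).1)) (fun m hm => hm), ?_⟩
    exact Set.Finite.subset (((hE n).2).union ((hF n).2)) (fun m hm => hm)
  · intro E hE Fr hF n
    constructor
    · refine (Set.Finite.biUnion (hF n).1 (fun z _ => (hE z).1)).subset ?_
      rintro m ⟨z, hmz, hzn⟩
      exact Set.mem_biUnion hzn hmz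
    · refine (Set.Finite.biUnion (hE n).2 (fun z _ => (hF z).2)).subset ?_
      rintro m ⟨z, hnz, hzm⟩
      exact Set.mem_biUnion hnz hzm

/-- The locally finite relations form a coarse structure on `ℕ`; the corresponding
algebraic uniform Roe algebra is a proper subset of `B(ℓ²(ℕ))`, but its norm closure
(the uniform Roe algebra) is all of `B(ℓ²(ℕ))`. -/
theorem statement5 :
    IsCoarseStructure ℕ lfRels ∧
    {a : ltwo →L[ℂ] ltwo | ∃ E ∈ lfRels, ControlledBy a E} ≠ Set.univ ∧
    (∀ (a : ltwo →L[ℂ] ltwo) (ε : ℝ), 0 < ε →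
      ∃ (b : ltwo →L[ℂ] ltwo) (E : Set (ℕ × ℕ)),
        E ∈ lfRels ∧ ControlledBy b E ∧ ‖a - b‖ ≤ ε) ∧
    closure {a : ltwo →L[ℂ] ltwo | ∃ E ∈ lfRels, ControlledBy a E} = Set.univ := by
  refine ⟨lf_coarse, not_all_controlled, fun a ε hε => approx a hε, ?_⟩
  apply Set.eq_univ_of_forall
  intro a
  rw [Metric.mem_closure_iff]
  intro ε hε
  obtain ⟨b, E, hE, hc, hn⟩ := approx a (half_pos hε)
  exact ⟨b, ⟨E, hE, hc⟩, by rw [dist_eq_norm]; linarith⟩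

end QCG
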